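/- Let η₁, η₂, ω₁, ω₂ : ℂ×ℂ → ℂ be ℂ-differentiable on an open set G′ ⊆ ℂ×ℂ, and let φₖ(a,b) = ηₖ(a, conj b) and θₖ(a,b) = ωₖ(a, conj b). Define the bicomplex product function χ = (φ₁·θ₁ − φ₂·θ₂, φ₂·θ₁ + φ₁·θ₂). Then the associated quaternionic function of χ satisfies Fueter's equation ∂Ψ/∂x + i·∂Ψ/∂y + j·∂Ψ/∂z + k·∂Ψ/∂u = 0 at every point (x,y,z,u) with (x+iy, z−iu) ∈ G′; that is, the bicomplex product of two regular functions with coanalytic components is again regular. -/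

import Mathlib

/-!
Read `(a, b) ∈ ℂ × ℂ` as the quaternion `a + b j`; then multiplying the pair by the complex
scalar `i` is left multiplication by the quaternion `i`. The function `Ψ` is
`ν (a, conj b)` read this way, where `ν = (η₁ω₁ - η₂ω₂, η₂ω₁ + η₁ω₂)` is holomorphic. Hence its
real derivative `L` satisfies `L (i, 0) = i L (1, 0)` and, the conjugation flipping the sign,
`L (0, i) = -i L (0, 1)`. As `i² = -1` and `k i = j`, the Fueter sum
`L (1, 0) + i L (i, 0) + j L (0, 1) + k L (0, i)` cancels in pairs.
-/

/-- The quaternionic function associated with a pair of complex functions: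
`Ψ(x,y,z,u) = Re φ₁ + (Im φ₁)i + (Re φ₂)j + (Im φ₂)k`, the argument being
`(x+iy, z+iu) ∈ ℂ × ℂ`. -/
noncomputable def quatFn (φ₁ φ₂ : ℂ × ℂ → ℂ) (p : ℂ × ℂ) : Quaternion ℝ :=
  ⟨(φ₁ p).re, (φ₁ p).im, (φ₂ p).re, (φ₂ p).im⟩

/-- The quaternion unit `i`. -/
noncomputable def qI : Quaternion ℝ := ⟨0, 1, 0, 0⟩
/-- The quaternion unit `j`. -/
noncomputable def qJ : Quaternion ℝ := ⟨0, 0, 1, 0⟩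
/-- The quaternion unit `k`. -/
noncomputable def qK : Quaternion ℝ := ⟨0, 0, 0, 1⟩

open Complex

noncomputable def quatOfPair : ℂ × ℂ →L[ℝ] Quaternion ℝ :=
  LinearMap.toContinuousLinearMap
    { toFun := fun v => ⟨v.1.re, v.1.im, v.2.re, v.2.im⟩
      map_add' _ _ := rfl
      map_smul' _ _ := by ext <;> simp <;> rfl }

@[simp] lemma quatOfPair_apply (v : ℂ × ℂ) :
    quatOfPair v = ⟨v.1.re, v.1.im, v.2.re, v.2.im⟩ := rfl

lemma quatOfPair_I_smul (v : ℂ × ℂ) : quatOfPair (I • v) = qI * quatOfPair v := by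
  ext <;>
    simp only [Quaternion.re_mul, Quaternion.imI_mul, Quaternion.imJ_mul, Quaternion.imK_mul] <;>
    simp [qI]

lemma qI_mul_qI : qI * qI = -1 := by
  ext <;> simp only [Quaternion.re_mul, Quaternion.imI_mul, Quaternion.imJ_mul, Quaternion.imK_mul,
    Quaternion.re_neg, Quaternion.imI_neg, Quaternion.imJ_neg, Quaternion.imK_neg,
    Quaternion.re_one, Quaternion.imI_one, Quaternion.imJ_one, Quaternion.imK_one] <;> simp [qI]

lemma qK_mul_qI : qK * qI = qJ := by
  ext <;>
    simp only [Quaternion.re_mul, Quaternion.imI_mul, Quaternion.imJ_mul, Quaternion.imK_mul] <;>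
    simp [qI, qJ, qK]

noncomputable def conjSnd : ℂ × ℂ →L[ℝ] ℂ × ℂ :=
  (ContinuousLinearMap.fst ℝ ℂ ℂ).prod
    ((conjCLE : ℂ →L[ℝ] ℂ).comp (ContinuousLinearMap.snd ℝ ℂ ℂ))

@[simp] lemma conjSnd_apply (v : ℂ × ℂ) : conjSnd v = (v.1, starRingEnd ℂ v.2) := rfl

lemma fueter_sum_quatOfPair_comp_conjSnd_eq_zero (A : ℂ × ℂ →L[ℂ] ℂ × ℂ) :
    let L := quatOfPair.comp ((A.restrictScalars ℝ).comp conjSnd)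
    L (1, 0) + qI * L (I, 0) + qJ * L (0, 1) + qK * L (0, I) = 0 := by
  intro L
  have hL : ∀ v, L v = quatOfPair (A (conjSnd v)) := fun _ => rfl
  have hx : L (I, 0) = qI * L (1, 0) := by
    have : conjSnd (I, 0) = I • conjSnd (1, 0) := by simp
    rw [hL, hL, this, map_smul, quatOfPair_I_smul]
  have hy : L (0, I) = -(qI * L (0, 1)) := by
    have : conjSnd (0, I) = -(I • conjSnd (0, 1)) := by simp
    rw [hL, hL, this, map_neg, map_smul, map_neg, quatOfPair_I_smul]
  rw [hx, hy, ← mul_assoc, qI_mul_qI, mul_neg, ← mul_assoc, qK_mul_qI]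
  noncomm_ring

lemma hasFDerivAt_quatFn_comp_conjSnd {ν : ℂ × ℂ → ℂ × ℂ} {A : ℂ × ℂ →L[ℂ] ℂ × ℂ}
    {p : ℂ × ℂ} (hν : HasFDerivAt ν A (conjSnd p)) :
    HasFDerivAt (quatFn (fun w => (ν (conjSnd w)).1) (fun w => (ν (conjSnd w)).2))
      (quatOfPair.comp ((A.restrictScalars ℝ).comp conjSnd)) p :=
  quatOfPair.hasFDerivAt.comp p ((hν.restrictScalars ℝ).comp p conjSnd.hasFDerivAt)

theorem bicomplex_product_of_regular_is_regular_general (G' : Set (ℂ × ℂ))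
    (η₁ η₂ ω₁ ω₂ : ℂ × ℂ → ℂ)
    (hdη₁ : ∀ q ∈ G', DifferentiableAt ℂ η₁ q)
    (hdη₂ : ∀ q ∈ G', DifferentiableAt ℂ η₂ q)
    (hdω₁ : ∀ q ∈ G', DifferentiableAt ℂ ω₁ q)
    (hdω₂ : ∀ q ∈ G', DifferentiableAt ℂ ω₂ q)
    (φ₁ φ₂ θ₁ θ₂ : ℂ × ℂ → ℂ)
    (hφ₁ : ∀ a b : ℂ, φ₁ (a, b) = η₁ (a, (starRingEnd ℂ) b))
    (hφ₂ : ∀ a b : ℂ, φ₂ (a, b) = η₂ (a, (starRingEnd ℂ) b))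
    (hθ₁ : ∀ a b : ℂ, θ₁ (a, b) = ω₁ (a, (starRingEnd ℂ) b))
    (hθ₂ : ∀ a b : ℂ, θ₂ (a, b) = ω₂ (a, (starRingEnd ℂ) b))
    (Ψ : ℂ × ℂ → Quaternion ℝ)
    (hΨ : Ψ = quatFn (fun p => φ₁ p * θ₁ p - φ₂ p * θ₂ p)
                     (fun p => φ₂ p * θ₁ p + φ₁ p * θ₂ p)) :
    ∀ x y z u : ℝ,
      ((x + y * Complex.I, z - u * Complex.I) : ℂ × ℂ) ∈ G' →
      fderiv ℝ Ψ (x + y * Complex.I, z + u * Complex.I) (1, 0) +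
        qI * fderiv ℝ Ψ (x + y * Complex.I, z + u * Complex.I) (Complex.I, 0) +
        qJ * fderiv ℝ Ψ (x + y * Complex.I, z + u * Complex.I) (0, 1) +
        qK * fderiv ℝ Ψ (x + y * Complex.I, z + u * Complex.I) (0, Complex.I) = 0 := by
  intro x y z u hq
  set p : ℂ × ℂ := (x + y * I, z + u * I)
  have hp : conjSnd p = (x + y * I, z - u * I) := by simp [p, Complex.ext_iff]
  set ν : ℂ × ℂ → ℂ × ℂ := fun w => (η₁ w * ω₁ w - η₂ w * ω₂ w, η₂ w * ω₁ w + η₁ w * ω₂ w)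
  have hν : DifferentiableAt ℂ ν (conjSnd p) := by
    rw [hp]
    have := hdη₁ _ hq; have := hdη₂ _ hq; have := hdω₁ _ hq; have := hdω₂ _ hq
    fun_prop
  have hΨν : Ψ = quatFn (fun w => (ν (conjSnd w)).1) (fun w => (ν (conjSnd w)).2) := by
    funext ⟨a, b⟩
    simp only [hΨ, quatFn, ν, conjSnd_apply, hφ₁, hφ₂, hθ₁, hθ₂]
    rfl
  rw [hΨν, (hasFDerivAt_quatFn_comp_conjSnd hν.hasFDerivAt).fderiv]
  exact fueter_sum_quatOfPair_comp_conjSnd_eq_zero _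

theorem bicomplex_product_of_regular_is_regular (G' : Set (ℂ × ℂ)) (hG' : IsOpen G')
    (η₁ η₂ ω₁ ω₂ : ℂ × ℂ → ℂ)
    (hdη₁ : ∀ q ∈ G', DifferentiableAt ℂ η₁ q)
    (hdη₂ : ∀ q ∈ G', DifferentiableAt ℂ η₂ q)
    (hdω₁ : ∀ q ∈ G', DifferentiableAt ℂ ω₁ q)
    (hdω₂ : ∀ q ∈ G', DifferentiableAt ℂ ω₂ q)
    (φ₁ φ₂ θ₁ θ₂ : ℂ × ℂ → ℂ)
    (hφ₁ : ∀ a b : ℂ, φ₁ (a, b) = η₁ (a, (starRingEnd ℂ) b))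
    (hφ₂ : ∀ a b : ℂ, φ₂ (a, b) = η₂ (a, (starRingEnd ℂ) b))
    (hθ₁ : ∀ a b : ℂ, θ₁ (a, b) = ω₁ (a, (starRingEnd ℂ) b))
    (hθ₂ : ∀ a b : ℂ, θ₂ (a, b) = ω₂ (a, (starRingEnd ℂ) b))
    (Ψ : ℂ × ℂ → Quaternion ℝ)
    (hΨ : Ψ = quatFn (fun p => φ₁ p * θ₁ p - φ₂ p * θ₂ p)
                     (fun p => φ₂ p * θ₁ p + φ₁ p * θ₂ p)) :
    ∀ x y z u : ℝ,
      ((x + y * Complex.I, z - u * Complex.I) : ℂ × ℂ) ∈ G' →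
      fderiv ℝ Ψ (x + y * Complex.I, z + u * Complex.I) (1, 0) +
        qI * fderiv ℝ Ψ (x + y * Complex.I, z + u * Complex.I) (Complex.I, 0) +
        qJ * fderiv ℝ Ψ (x + y * Complex.I, z + u * Complex.I) (0, 1) +
        qK * fderiv ℝ Ψ (x + y * Complex.I, z + u * Complex.I) (0, Complex.I) = 0 :=
  bicomplex_product_of_regular_is_regular_general G' η₁ η₂ ω₁ ω₂ hdη₁ hdη₂ hdω₁ hdω₂ φ₁ φ₂ θ₁ θ₂ hφ₁
    hφ₂ hθ₁ hθ₂ Ψ hΨ
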